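/- Let (i,j) be a pair of distinct vertices with w_ij < w̄ and let δ ∈ (0, w̄ − w_ij]. Then the exact change in polarization from adding weight δ to edge (i,j) is P(z) − P(z⁺) = 2δ·(z̃ᵀ(I+L)^{-1}v_ij)·(v_ijᵀ z̃)/(1 + δ·v_ijᵀ(I+L)^{-1}v_ij) − δ²·(v_ijᵀ(I+L)^{-2}v_ij)·(z_i − z_j)²/(1 + δ·v_ijᵀ(I+L)^{-1}v_ij)². -/

import Mathlib

open Matrix Finset

noncomputable def deg {n : ℕ} (W : Matrix (Fin n) (Fin n) ℝ) (i : Fin n) : ℝ := ∑ j, W i j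

noncomputable def lap {n : ℕ} (W : Matrix (Fin n) (Fin n) ℝ) : Matrix (Fin n) (Fin n) ℝ :=
  Matrix.diagonal (deg W) - W

noncomputable def mean {n : ℕ} (x : Fin n → ℝ) : ℝ := (∑ i, x i) / n

noncomputable def ctr {n : ℕ} (x : Fin n → ℝ) : Fin n → ℝ := fun i => x i - mean x

noncomputable def pol {n : ℕ} (x : Fin n → ℝ) : ℝ := ∑ i, (x i - mean x) ^ 2

def vij {n : ℕ} (i j : Fin n) : Fin n → ℝ :=
  fun k => (if k = i then (1 : ℝ) else 0) - (if k = j then (1 : ℝ) else 0)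

/-! By Sherman–Morrison, adding `δ v vᵀ` to `A = I + L` moves the expressed opinions along
`u = A⁻¹ v`: `z⁺ = z - c u` with `c = δ (vᵀ z) / (1 + δ vᵀ u)`. As `L` is symmetric with zero row
sums, `A⁻¹` preserves the total opinion, so `u` sums to zero and the shift leaves the mean
unchanged; expanding `‖z̃ - c u‖²` gives the formula. Positive semidefiniteness of `L` makes `A`
and its update invertible and the denominator `1 + δ vᵀ u` positive. -/

section RankOneUpdate

variable {ι α : Type*} [Fintype ι] [Field α]

/-- The Sherman–Morrison formula, applied to a right-hand side `b`. -/
theorem add_smul_vecMulVec_mulVec_sub_smul {A : Matrix ι ι α} {x b u v : ι → α} {δ : α}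
    (hx : A *ᵥ x = b) (hu : A *ᵥ u = v) (hD : 1 + δ * (v ⬝ᵥ u) ≠ 0) :
    (A + δ • vecMulVec v v) *ᵥ (x - (δ * (v ⬝ᵥ x) / (1 + δ * (v ⬝ᵥ u))) • u) = b := by
  set c := δ * (v ⬝ᵥ x) / (1 + δ * (v ⬝ᵥ u))
  have hc : c * (1 + δ * (v ⬝ᵥ u)) = δ * (v ⬝ᵥ x) := div_mul_cancel₀ _ hD
  have hcoef : δ * (v ⬝ᵥ (x - c • u)) - c = 0 := by
    rw [dotProduct_sub, dotProduct_smul, smul_eq_mul]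
    linear_combination -hc
  rw [add_mulVec, mulVec_sub, mulVec_smul, hx, hu, smul_mulVec, vecMulVec_mulVec,
    op_smul_eq_smul, smul_smul, sub_add_eq_add_sub, add_sub_assoc, ← sub_smul, hcoef,
    zero_smul, add_zero]

end RankOneUpdate

namespace Matrix.PosDef

variable {ι : Type*} [Fintype ι] [DecidableEq ι] {A : Matrix ι ι ℝ}

lemma one_add_smul_dotProduct_inv_mulVec_pos (hA : A.PosDef) {δ : ℝ} (hδ : 0 ≤ δ)
    (v : ι → ℝ) : 0 < 1 + δ * (v ⬝ᵥ (A⁻¹ *ᵥ v)) := by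
  have := hA.posSemidef.inv.dotProduct_mulVec_nonneg v
  simp only [star_trivial] at this
  positivity

lemma inv_add_smul_vecMulVec_mulVec (hA : A.PosDef) {δ : ℝ} (hδ : 0 ≤ δ) (v b : ι → ℝ) :
    (A + δ • vecMulVec v v)⁻¹ *ᵥ b = A⁻¹ *ᵥ b -
      (δ * (v ⬝ᵥ (A⁻¹ *ᵥ b)) / (1 + δ * (v ⬝ᵥ (A⁻¹ *ᵥ v)))) • (A⁻¹ *ᵥ v) := by
  have hAinv : A * A⁻¹ = 1 := mul_nonsing_inv _ (hA.isUnit.map detMonoidHom)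
  have := (hA.add_posSemidef ((posSemidef_vecMulVec_self_star v).smul hδ)).isUnit.invertible
  refine inv_mulVec_eq_vec (add_smul_vecMulVec_mulVec_sub_smul ?_ ?_
    (hA.one_add_smul_dotProduct_inv_mulVec_pos hδ v).ne').symm <;>
    rw [mulVec_mulVec, hAinv, one_mulVec]

end Matrix.PosDef

section Polarization

variable {n : ℕ}

lemma mean_sub_smul {u : Fin n → ℝ} (hu : ∑ k, u k = 0) (x : Fin n → ℝ) (c : ℝ) :
    mean (x - c • u) = mean x := by
  simp [mean, Finset.sum_sub_distrib, ← Finset.mul_sum, hu]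

lemma pol_sub_pol_sub_smul {u : Fin n → ℝ} (hu : ∑ k, u k = 0) (x : Fin n → ℝ) (c : ℝ) :
    pol x - pol (x - c • u) = 2 * c * (ctr x ⬝ᵥ u) - c ^ 2 * (u ⬝ᵥ u) := by
  simp only [pol, mean_sub_smul hu, ctr, dotProduct, Finset.mul_sum, ← Finset.sum_sub_distrib,
    Pi.sub_apply, Pi.smul_apply, smul_eq_mul]
  exact Finset.sum_congr rfl fun k _ => by ring

lemma dotProduct_ctr_of_sum_eq_zero {v : Fin n → ℝ} (hv : ∑ k, v k = 0) (x : Fin n → ℝ) :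
    v ⬝ᵥ ctr x = v ⬝ᵥ x := by
  simp [ctr, dotProduct, mul_sub, Finset.sum_sub_distrib, ← Finset.sum_mul, hv]

lemma sum_vij (i j : Fin n) : ∑ k, vij i j k = 0 := by
  simp [vij, Finset.sum_sub_distrib]

lemma vij_dotProduct (i j : Fin n) (x : Fin n → ℝ) : vij i j ⬝ᵥ x = x i - x j := by
  simp [vij, dotProduct, sub_mul, Finset.sum_sub_distrib, ite_mul]

end Polarization

section Laplacian

variable {n : ℕ} {W : Matrix (Fin n) (Fin n) ℝ}

lemma lap_isSymm (hW : W.IsSymm) : (lap W).IsSymm :=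
  (isSymm_diagonal _).sub hW

lemma lap_mulVec_one (W : Matrix (Fin n) (Fin n) ℝ) : lap W *ᵥ 1 = 0 := by
  ext i
  rw [lap, sub_mulVec, Pi.sub_apply, mulVec_diagonal]
  simp [deg, mulVec, dotProduct]

lemma one_vecMul_lap (hW : W.IsSymm) : 1 ᵥ* lap W = 0 := by
  rw [← (lap_isSymm hW).eq, vecMul_transpose, lap_mulVec_one]

lemma two_mul_dotProduct_lap_mulVec (hW : W.IsSymm) (x : Fin n → ℝ) :
    2 * (x ⬝ᵥ (lap W *ᵥ x)) = ∑ i, ∑ j, W i j * (x i - x j) ^ 2 := by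
  have hquad : x ⬝ᵥ (lap W *ᵥ x) = ∑ i, ∑ j, W i j * (x i ^ 2 - x i * x j) := by
    rw [lap, sub_mulVec, dotProduct_sub]
    simp only [dotProduct, mulVec_diagonal]
    simp only [mulVec, dotProduct, deg, Finset.sum_mul, Finset.mul_sum, ← Finset.sum_sub_distrib]
    exact Finset.sum_congr rfl fun i _ => Finset.sum_congr rfl fun j _ => by ring
  have hswap : ∑ i, ∑ j, W i j * (x j ^ 2 - x i * x j)
      = ∑ i, ∑ j, W i j * (x i ^ 2 - x i * x j) := by
    rw [Finset.sum_comm]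
    exact Finset.sum_congr rfl fun i _ => Finset.sum_congr rfl fun j _ => by
      rw [hW.apply]; ring
  calc 2 * (x ⬝ᵥ (lap W *ᵥ x))
      = ∑ i, ∑ j, W i j * (x i ^ 2 - x i * x j) + ∑ i, ∑ j, W i j * (x j ^ 2 - x i * x j) := by
        rw [hswap, hquad, two_mul]
    _ = ∑ i, ∑ j, W i j * (x i - x j) ^ 2 := by
        simp only [← Finset.sum_add_distrib]
        exact Finset.sum_congr rfl fun i _ => Finset.sum_congr rfl fun j _ => by ring

lemma lap_posSemidef (hW : W.IsSymm) (hnn : ∀ i j, 0 ≤ W i j) : (lap W).PosSemidef := by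
  refine .of_dotProduct_mulVec_nonneg (lap_isSymm hW) fun x => ?_
  have := two_mul_dotProduct_lap_mulVec hW x
  have : 0 ≤ ∑ i, ∑ j, W i j * (x i - x j) ^ 2 :=
    Finset.sum_nonneg fun i _ => Finset.sum_nonneg fun j _ => mul_nonneg (hnn i j) (sq_nonneg _)
  simp only [star_trivial]
  linarith

lemma posDef_one_add_lap (hW : W.IsSymm) (hnn : ∀ i j, 0 ≤ W i j) : (1 + lap W).PosDef :=
  PosDef.one.add_posSemidef (lap_posSemidef hW hnn)

lemma sum_inv_one_add_lap_mulVec (hW : W.IsSymm) (hnn : ∀ i j, 0 ≤ W i j) (x : Fin n → ℝ) :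
    ∑ k, ((1 + lap W)⁻¹ *ᵥ x) k = ∑ k, x k := by
  have hunit : (1 + lap W) * (1 + lap W)⁻¹ = 1 :=
    mul_nonsing_inv _ ((posDef_one_add_lap hW hnn).isUnit.map detMonoidHom)
  have hcol : (1 : Fin n → ℝ) ᵥ* (1 + lap W) = 1 := by
    rw [vecMul_add, vecMul_one, one_vecMul_lap hW, add_zero]
  have hcol_inv : (1 : Fin n → ℝ) ᵥ* (1 + lap W)⁻¹ = 1 := by
    rw [← hcol, vecMul_vecMul, hunit, vecMul_one, hcol]
  calc ∑ k, ((1 + lap W)⁻¹ *ᵥ x) k = 1 ⬝ᵥ ((1 + lap W)⁻¹ *ᵥ x) := (one_dotProduct _).symm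
    _ = ∑ k, x k := by rw [dotProduct_mulVec, hcol_inv, one_dotProduct]

end Laplacian

theorem stmt_2_general {n : ℕ} (wbar : ℝ)
    (W : Matrix (Fin n) (Fin n) ℝ)
    (hsymm : W.IsSymm)
    (hW : ∀ i j, 0 ≤ W i j ∧ W i j ≤ wbar)
    (s : Fin n → ℝ) (i j : Fin n)
    (δ : ℝ) (hδ0 : 0 < δ)
    (z zp : Fin n → ℝ)
    (hz : z = (1 + lap W)⁻¹ *ᵥ s)
    (hzp : zp = (1 + (lap W + δ • vecMulVec (vij i j) (vij i j)))⁻¹ *ᵥ s) :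
    pol z - pol zp =
      2 * δ * (ctr z ⬝ᵥ ((1 + lap W)⁻¹ *ᵥ vij i j)) * (vij i j ⬝ᵥ ctr z) /
          (1 + δ * (vij i j ⬝ᵥ ((1 + lap W)⁻¹ *ᵥ vij i j))) -
        δ ^ 2 * (vij i j ⬝ᵥ (((1 + lap W)⁻¹ * (1 + lap W)⁻¹) *ᵥ vij i j)) *
            (z i - z j) ^ 2 /
          (1 + δ * (vij i j ⬝ᵥ ((1 + lap W)⁻¹ *ᵥ vij i j))) ^ 2 := by
  have hnn : ∀ a b, 0 ≤ W a b := fun a b => (hW a b).1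
  set A := 1 + lap W
  set u := A⁻¹ *ᵥ vij i j with hu
  have hA : A.PosDef := posDef_one_add_lap hsymm hnn
  have hsum_u : ∑ k, u k = 0 :=
    (sum_inv_one_add_lap_mulVec hsymm hnn _).trans (sum_vij i j)
  have huu : vij i j ⬝ᵥ ((A⁻¹ * A⁻¹) *ᵥ vij i j) = u ⬝ᵥ u := by
    have hAsymm : A.IsSymm := isSymm_one.add (lap_isSymm hsymm)
    rw [← mulVec_mulVec, dotProduct_mulVec, ← mulVec_transpose, hAsymm.inv.eq]
  have hD : 0 < 1 + δ * (vij i j ⬝ᵥ u) := hA.one_add_smul_dotProduct_inv_mulVec_pos hδ0.le _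
  rw [hzp, ← add_assoc, hA.inv_add_smul_vecMulVec_mulVec hδ0.le, ← hz, ← hu,
    pol_sub_pol_sub_smul hsum_u, huu, dotProduct_ctr_of_sum_eq_zero (sum_vij i j),
    ← vij_dotProduct]
  field_simp

/-- Lemma 1: exact change in polarization from adding weight `δ`
to the edge `(i,j)`. -/
theorem stmt_2 {n : ℕ} (hn : 2 ≤ n) (wbar : ℝ) (hwbar : 0 < wbar)
    (W : Matrix (Fin n) (Fin n) ℝ)
    (hsymm : W.IsSymm) (hdiag : ∀ i, W i i = 0)
    (hW : ∀ i j, 0 ≤ W i j ∧ W i j ≤ wbar)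
    (s : Fin n → ℝ) (i j : Fin n) (hij : i ≠ j)
    (hwij : W i j < wbar)
    (δ : ℝ) (hδ0 : 0 < δ) (hδ : δ ≤ wbar - W i j)
    (z zp : Fin n → ℝ)
    (hz : z = (1 + lap W)⁻¹ *ᵥ s)
    (hzp : zp = (1 + (lap W + δ • vecMulVec (vij i j) (vij i j)))⁻¹ *ᵥ s) :
    pol z - pol zp =
      2 * δ * (ctr z ⬝ᵥ ((1 + lap W)⁻¹ *ᵥ vij i j)) * (vij i j ⬝ᵥ ctr z) /
          (1 + δ * (vij i j ⬝ᵥ ((1 + lap W)⁻¹ *ᵥ vij i j))) -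
        δ ^ 2 * (vij i j ⬝ᵥ (((1 + lap W)⁻¹ * (1 + lap W)⁻¹) *ᵥ vij i j)) *
            (z i - z j) ^ 2 /
          (1 + δ * (vij i j ⬝ᵥ ((1 + lap W)⁻¹ *ᵥ vij i j))) ^ 2 :=
  stmt_2_general wbar W hsymm hW s i j δ hδ0 z zp hz hzp
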